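/- arXiv:1304.1731 — 3 statements merged into one kernel-verified Lean document; each statement's English description precedes it below -/
import Mathlib

section
/- Plancherel formula over GF(q): for f, g : G → GF(q), Σ_{x∈G} f(x)·ḡ(x) = (|G| mod p)^{-1} Σ_{α∈G} f̂(α)·(ĝ(α))‾, where ȳ = y^{p^n}. -/
/-!
Conjugation `y ↦ y ^ p ^ n` is additive in characteristic `p` and inverts the character values,
which are `(p ^ n + 1)`-th roots of unity, so `(ĝ α)‾ = ∑ y, ḡ y * χ α (-y)`. Expanding both
transforms then weights `f x * ḡ y` by `∑ α, χ α (x - y)`, which by symmetry is the sum of the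
character `χ (x - y)`; nondegeneracy makes it `|G|` for `x = y` and `0` otherwise. Finally `|G|` is
invertible in `F`: by Cauchy, a prime `p ∣ |G|` would be the order of an element, hence divide
`p ^ n + 1`.
-/

open Finset

def AddChar.ofMapAddEqMul {A M : Type*} [AddMonoid A] [MonoidWithZero M] [IsLeftCancelMulZero M]
    (ψ : A → M) (h0 : ψ 0 ≠ 0) (hadd : ∀ x y, ψ (x + y) = ψ x * ψ y) : AddChar A M where
  toFun := ψ
  map_zero_eq_one' := (mul_eq_left₀ h0).1 (by rw [← hadd, add_zero])
  map_add_eq_mul' := hadd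

theorem not_dvd_card_of_forall_nsmul_eq_zero {G : Type*} [AddGroup G] [Fintype G] {p m : ℕ}
    (hp : p.Prime) (hpm : ¬ p ∣ m) (hm : ∀ x : G, m • x = 0) : ¬ p ∣ Fintype.card G := by
  intro hdvd
  have := Fact.mk hp
  obtain ⟨x, hx⟩ := exists_prime_addOrderOf_dvd_card p hdvd
  exact hpm (hx ▸ addOrderOf_dvd_of_nsmul_eq_zero (hm x))

theorem Nat.Prime.not_dvd_pow_add_one {p n : ℕ} (hp : p.Prime) (hn : n ≠ 0) : ¬ p ∣ p ^ n + 1 :=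
  fun h => hp.not_dvd_one ((Nat.dvd_add_right (dvd_pow_self p hn)).1 h)

namespace AddChar

variable {G R : Type*} [AddCommGroup G] [Fintype G]

theorem sum_apply_eq_ite_of_symm [CommRing R] [IsDomain R] [DecidableEq G]
    (ψ : G → AddChar G R) (hsymm : ∀ α x, ψ α x = ψ x α)
    (hinj : ∀ α, (∀ x, ψ α x = 1) → α = 0) (z : G) :
    ∑ α, ψ α z = if z = 0 then (Fintype.card G : R) else 0 := by
  have hz : ψ z = 0 ↔ z = 0 := by
    refine ⟨fun h => hinj z (eq_zero_iff.1 h), ?_⟩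
    rintro rfl
    exact eq_zero_iff.2 fun x => by rw [hsymm, map_zero_eq_one]
  simp_rw [hsymm _ z, sum_eq_ite, hz]

theorem sum_fourier_mul_fourier_neg [CommRing R] [IsDomain R]
    (ψ : G → AddChar G R) (hsymm : ∀ α x, ψ α x = ψ x α)
    (hinj : ∀ α, (∀ x, ψ α x = 1) → α = 0) (f g : G → R) :
    ∑ α, (∑ x, f x * ψ α x) * (∑ y, g y * ψ α (-y)) =
      Fintype.card G * ∑ x, f x * g x := by
  classical
  calc ∑ α, (∑ x, f x * ψ α x) * (∑ y, g y * ψ α (-y))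
      = ∑ x, ∑ y, f x * g y * ∑ α, ψ α (x - y) := by
        simp_rw [sum_mul_sum, mul_sum, sub_eq_add_neg, map_add_eq_mul]
        rw [sum_comm]
        refine sum_congr rfl fun x _ => ?_
        rw [sum_comm]
        exact sum_congr rfl fun y _ => sum_congr rfl fun α _ => by ring
    _ = ∑ x, f x * g x * Fintype.card G := by
        simp_rw [sum_apply_eq_ite_of_symm ψ hsymm hinj, sub_eq_zero, mul_ite, mul_zero,
          sum_ite_eq, mem_univ, if_true]
    _ = _ := by rw [← sum_mul, mul_comm]

theorem sum_mul_pow_char_pow [CommRing R] {p n : ℕ} [ExpChar R p] (ψ : AddChar G R)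
    (hroot : ∀ x, ψ x ^ (p ^ n + 1) = 1) (g : G → R) :
    (∑ x, g x * ψ x) ^ p ^ n = ∑ x, g x ^ p ^ n * ψ (-x) := by
  have hconj x : ψ x ^ p ^ n = ψ (-x) :=
    left_inv_eq_right_inv (by rw [← pow_succ, hroot])
      (by rw [← map_add_eq_mul, add_neg_cancel, map_zero_eq_one])
  simp_rw [sum_pow_char_pow, mul_pow, hconj]

end AddChar

/-- Plancherel formula over `GF(q)`:
`∑ x, f x * conj (g x) = (|G| mod p)⁻¹ * ∑ α, f̂ α * conj (ĝ α)`,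
where `conj y = y ^ (p ^ n)`. -/
theorem plancherel (p n : ℕ) (hp : Nat.Prime p) (hn : n ≠ 0)
    (F : Type*) [Field F] [Fintype F] (hF : Fintype.card F = p ^ (2 * n))
    (G : Type*) [AddCommGroup G] [Fintype G]
    (hexp : ∀ x : G, (p ^ n + 1) • x = 0)
    (χ : G → G → F)
    (hadd : ∀ α x y : G, χ α (x + y) = χ α x * χ α y)
    (hroot : ∀ α x : G, χ α x ^ (p ^ n + 1) = 1)
    (hsymm : ∀ α x : G, χ α x = χ x α)
    (hinj : ∀ α : G, (∀ x : G, χ α x = 1) → α = 0)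
    (f g : G → F) :
    ∑ x : G, f x * (g x) ^ p ^ n =
      (Fintype.card G : F)⁻¹ *
        ∑ α : G, (∑ x : G, f x * χ α x) * ((∑ x : G, g x * χ α x)) ^ p ^ n := by
  have := Fact.mk hp
  have := charP_of_card_eq_prime_pow hF
  have hcard : (Fintype.card G : F) ≠ 0 := by
    rw [Ne, CharP.cast_eq_zero_iff F p]
    exact not_dvd_card_of_forall_nsmul_eq_zero hp (hp.not_dvd_pow_add_one hn) hexp
  have hne α x : χ α x ≠ 0 := fun h => by simpa [h] using hroot α x
  let ψ α : AddChar G F := .ofMapAddEqMul (χ α) (hne α 0) (hadd α)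
  change _ = _ * ∑ α, (∑ x, f x * ψ α x) * (∑ x, g x * ψ α x) ^ p ^ n
  simp_rw [AddChar.sum_mul_pow_char_pow (ψ _) (hroot _),
    AddChar.sum_fourier_mul_fourier_neg ψ hsymm hinj, inv_mul_cancel_left₀ hcard]
end

section
/- Parseval equation over GF(q): for f : G → GF(q), Σ_{x∈G} norm(f(x)) = (|G| mod p)^{-1} Σ_{α∈G} norm(f̂(α)); in particular, if f takes values in S(GF(q)) then Σ_{α∈G} norm(f̂(α)) = (|G| mod p)². -/
/-!
The map `y ↦ y ^ p ^ n` is a ring endomorphism of `F` (Frobenius) and sends `χ α y` to `χ α (-y)`,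
since `χ α y` is a `(p ^ n + 1)`-th root of unity. Expanding `f̂ α * (f̂ α) ^ p ^ n` as a double sum
over `x, y`, the sum over `α` therefore collapses by orthogonality of characters to
`|G| * ∑ x, f x * f x ^ p ^ n`. The factor `|G|` is invertible in `F` because `G` has exponent
prime to `p`, so no element of `G` has order `p`.
-/

open Finset

section

variable {G : Type*} [AddCommGroup G]

def AddChar.ofMapAdd {K : Type*} [MonoidWithZero K] [IsLeftCancelMulZero K] (χ : G → K)
    (hadd : ∀ x y, χ (x + y) = χ x * χ y) (h0 : χ 0 ≠ 0) : AddChar G K where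
  toFun := χ
  map_zero_eq_one' := mul_left_cancel₀ h0 (by rw [← hadd, add_zero, mul_one])
  map_add_eq_mul' := hadd

theorem AddChar.pow_eq_map_neg_of_pow_succ_eq_one {K : Type*} [DivisionMonoid K]
    (ψ : AddChar G K) {m : ℕ} {x : G} (h : ψ x ^ (m + 1) = 1) : ψ x ^ m = ψ (-x) := by
  rw [AddChar.map_neg_eq_inv]
  exact eq_inv_of_mul_eq_one_left (by rwa [← pow_succ])

theorem natCast_card_ne_zero_of_forall_nsmul_eq_zero [Fintype G] {R : Type*} [AddMonoidWithOne R]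
    {p m : ℕ} [Fact p.Prime] [CharP R p] (hG : ∀ x : G, m • x = 0) (hpm : ¬ p ∣ m) :
    (Fintype.card G : R) ≠ 0 := by
  rw [Ne, CharP.cast_eq_zero_iff R p]
  intro hpG
  obtain ⟨x, hx⟩ := exists_prime_addOrderOf_dvd_card p hpG
  exact hpm (hx ▸ addOrderOf_dvd_of_nsmul_eq_zero (hG x))

section Pairing

variable [Fintype G] {R : Type*} [CommRing R] [IsDomain R] (ψ : G → AddChar G R)
  (hsymm : ∀ α x, ψ α x = ψ x α) (hnondeg : ∀ α, ψ α = 1 → α = 0)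
include hsymm hnondeg

theorem sum_symm_addChar_apply (z : G) [Decidable (z = 0)] :
    ∑ α, ψ α z = if z = 0 then (Fintype.card G : R) else 0 := by
  have hψz : ψ z = 0 ↔ z = 0 := by
    refine ⟨hnondeg z, ?_⟩
    rintro rfl
    exact AddChar.eq_zero_iff.2 fun α ↦ by rw [hsymm, AddChar.map_zero_eq_one]
  simp_rw [hsymm _ z, AddChar.sum_eq_ite (ψ z), hψz]

theorem sum_fourier_mul_map_fourier (σ : R →+* R) (hσ : ∀ α x, σ (ψ α x) = ψ α (-x))
    (f : G → R) :
    ∑ α, (∑ x, f x * ψ α x) * σ (∑ x, f x * ψ α x) = Fintype.card G * ∑ x, f x * σ (f x) := by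
  classical
  calc ∑ α, (∑ x, f x * ψ α x) * σ (∑ x, f x * ψ α x)
      = ∑ x, ∑ y, f x * σ (f y) * ∑ α, ψ α (x - y) := by
        simp_rw [map_sum, map_mul, hσ, sum_mul_sum, mul_sum]
        rw [sum_comm]
        refine sum_congr rfl fun x _ ↦ ?_
        rw [sum_comm]
        refine sum_congr rfl fun y _ ↦ sum_congr rfl fun α _ ↦ ?_
        rw [sub_eq_add_neg, AddChar.map_add_eq_mul]
        ring
    _ = ∑ x, f x * σ (f x) * Fintype.card G := by
        simp_rw [sum_symm_addChar_apply ψ hsymm hnondeg, sub_eq_zero, mul_ite, mul_zero,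
          sum_ite_eq, mem_univ, if_true]
    _ = Fintype.card G * ∑ x, f x * σ (f x) := by
        rw [← sum_mul, mul_comm]

end Pairing

end

/-- Parseval equation over `GF(q)`:
`∑ x, norm (f x) = (|G| mod p)⁻¹ * ∑ α, norm (f̂ α)`, where `norm y = y * y ^ (p ^ n)`;
in particular if `f` takes values in the unit circle then
`∑ α, norm (f̂ α) = (|G| mod p) ^ 2`. -/
theorem parseval (p n : ℕ) (hp : Nat.Prime p) (hn : n ≠ 0)
    (F : Type*) [Field F] [Fintype F] (hF : Fintype.card F = p ^ (2 * n))
    (G : Type*) [AddCommGroup G] [Fintype G]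
    (hexp : ∀ x : G, (p ^ n + 1) • x = 0)
    (χ : G → G → F)
    (hadd : ∀ α x y : G, χ α (x + y) = χ α x * χ α y)
    (hroot : ∀ α x : G, χ α x ^ (p ^ n + 1) = 1)
    (hsymm : ∀ α x : G, χ α x = χ x α)
    (hinj : ∀ α : G, (∀ x : G, χ α x = 1) → α = 0)
    (f : G → F) :
    (∑ x : G, f x * (f x) ^ p ^ n =
      (Fintype.card G : F)⁻¹ *
        ∑ α : G, (∑ x : G, f x * χ α x) * ((∑ x : G, f x * χ α x)) ^ p ^ n) ∧
    ((∀ x : G, f x * (f x) ^ p ^ n = 1) →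
      ∑ α : G, (∑ x : G, f x * χ α x) * ((∑ x : G, f x * χ α x)) ^ p ^ n =
        (Fintype.card G : F) ^ 2) := by
  have : Fact p.Prime := ⟨hp⟩
  have : CharP F p := charP_of_card_eq_prime_pow hF
  have hχ0 : ∀ α, χ α 0 ≠ 0 := fun α h ↦ by simpa [h] using hroot α 0
  let ψ : G → AddChar G F := fun α ↦ AddChar.ofMapAdd (χ α) (hadd α) (hχ0 α)
  have hp_not_dvd : ¬ p ∣ p ^ n + 1 := fun h ↦
    hp.not_dvd_one ((Nat.dvd_add_right (dvd_pow_self p hn)).mp h)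
  have hGne : (Fintype.card G : F) ≠ 0 :=
    natCast_card_ne_zero_of_forall_nsmul_eq_zero hexp hp_not_dvd
  have key : ∑ α, (∑ x, f x * χ α x) * (∑ x, f x * χ α x) ^ p ^ n =
      Fintype.card G * ∑ x, f x * f x ^ p ^ n :=
    sum_fourier_mul_map_fourier ψ hsymm (fun α h ↦ hinj α (AddChar.eq_one_iff.1 h))
      (iterateFrobenius F p n) (fun α x ↦ (ψ α).pow_eq_map_neg_of_pow_succ_eq_one (hroot α x)) f
  refine ⟨by rw [key, inv_mul_cancel_left₀ hGne], fun hnorm ↦ ?_⟩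
  rw [key, sum_congr rfl fun x _ ↦ hnorm x, sum_const, card_univ, nsmul_one, sq]
end

section
/- Let f : G → S(GF(q)) be bent and let s ∈ GF(p) satisfy s² = |G| mod p with s ≠ 0. Then the dual function f̃(α) = s^{-1}·f̂(α) takes values in S(GF(q)) and is itself bent. -/
/-!
Viewing `χ` as a symmetric nondegenerate pairing `G → AddChar G F`, orthogonality of characters
gives the inversion formula `f̂̂(α) = |G| · f(-α)`. Since `s` lies in the prime field it is fixed by
conjugation `y ↦ y ^ p ^ n`, so `norm (c * y) = c ^ 2 * norm y` for `c = s` and `c = s⁻¹`. Hence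
`norm (s⁻¹ f̂(α)) = s⁻² |G| = 1`, and the transform of the dual is `s⁻¹ |G| f(-α) = s f(-α)`,
whose norm is `s ^ 2 = |G|`.
-/

open Finset

theorem pow_pow_eq_self {M : Type*} [Monoid M] {s : M} {p : ℕ} (h : s ^ p = s) (k : ℕ) :
    s ^ p ^ k = s :=
  (congrFun (pow_iterate p k) s).symm.trans (Function.iterate_fixed h k)

theorem mul_mul_pow_mul_of_pow_eq_self {M : Type*} [CommMonoid M] {c : M} {m : ℕ}
    (hc : c ^ m = c) (a : M) : c * a * (c * a) ^ m = c ^ 2 * (a * a ^ m) := by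
  rw [mul_pow, hc, mul_mul_mul_comm, sq]

theorem map_zero_eq_one_of_map_add {A M₀ : Type*} [AddZeroClass A] [MonoidWithZero M₀]
    [IsLeftCancelMulZero M₀] {φ : A → M₀} (hadd : ∀ x y, φ (x + y) = φ x * φ y) (h0 : φ 0 ≠ 0) : φ 0 = 1 :=
  mul_left_cancel₀ h0 (by rw [← hadd, add_zero, mul_one])

section Pairing

variable {G R : Type*} [AddCommGroup G] [Fintype G] [CommRing R]

def fourierTransform (ψ : G → AddChar G R) (f : G → R) (α : G) : R :=
  ∑ x, f x * ψ α x

theorem fourierTransform_const_mul (ψ : G → AddChar G R) (c : R) (f : G → R) (α : G) :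
    fourierTransform ψ (fun x => c * f x) α = c * fourierTransform ψ f α := by
  simp only [fourierTransform, mul_sum, mul_assoc]

variable [IsDomain R] {ψ : G → AddChar G R}

theorem sum_pairing_eq_ite [DecidableEq G] (hsymm : ∀ α x, ψ α x = ψ x α)
    (hinj : ∀ α, ψ α = 0 → α = 0) (z : G) :
    ∑ x, ψ z x = if z = 0 then (Fintype.card G : R) else 0 := by
  have hzero : ψ z = 0 ↔ z = 0 := by
    refine ⟨hinj z, ?_⟩
    rintro rfl
    exact AddChar.eq_zero_iff.2 fun x => by rw [hsymm, AddChar.map_zero_eq_one]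
  rw [AddChar.sum_eq_ite]
  exact if_congr hzero rfl rfl

theorem fourierTransform_fourierTransform (hsymm : ∀ α x, ψ α x = ψ x α)
    (hinj : ∀ α, ψ α = 0 → α = 0) (f : G → R) (α : G) :
    fourierTransform ψ (fourierTransform ψ f) α = Fintype.card G * f (-α) := by
  classical
  calc fourierTransform ψ (fourierTransform ψ f) α
      = ∑ x, ∑ y, f y * ψ (y + α) x := by
        refine sum_congr rfl fun x _ => ?_
        rw [fourierTransform, sum_mul]
        refine sum_congr rfl fun y _ => ?_
        rw [hsymm (y + α), AddChar.map_add_eq_mul, hsymm α x, mul_assoc]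
    _ = ∑ y, f y * ∑ x, ψ (y + α) x := by
        rw [sum_comm]
        simp only [mul_sum]
    _ = Fintype.card G * f (-α) := by
        simp [sum_pairing_eq_ite hsymm hinj, add_eq_zero_iff_eq_neg, mul_comm]

end Pairing

theorem dual_bent_general (p n : ℕ)
    (F : Type*) [Field F]
    (G : Type*) [AddCommGroup G] [Fintype G]
    (χ : G → G → F)
    (hadd : ∀ α x y : G, χ α (x + y) = χ α x * χ α y)
    (hroot : ∀ α x : G, χ α x ^ (p ^ n + 1) = 1)
    (hsymm : ∀ α x : G, χ α x = χ x α)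
    (hinj : ∀ α : G, (∀ x : G, χ α x = 1) → α = 0)
    (f : G → F) (hf : ∀ x : G, f x * (f x) ^ p ^ n = 1)
    (hbent : ∀ α : G, (∑ x : G, f x * χ α x) * ((∑ x : G, f x * χ α x)) ^ p ^ n =
      (Fintype.card G : F))
    (s : F) (hs0 : s ≠ 0) (hs2 : s ^ 2 = (Fintype.card G : F)) (hsp : s ^ p = s) :
    (∀ α : G,
      (s⁻¹ * ∑ x : G, f x * χ α x) * (s⁻¹ * ∑ x : G, f x * χ α x) ^ p ^ n = 1) ∧
    (∀ α : G,
      (∑ x : G, (s⁻¹ * ∑ y : G, f y * χ x y) * χ α x) *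
        ((∑ x : G, (s⁻¹ * ∑ y : G, f y * χ x y) * χ α x)) ^ p ^ n =
        (Fintype.card G : F)) := by
  have hχ0 (α : G) : χ α 0 = 1 :=
    map_zero_eq_one_of_map_add (hadd α)
      (ne_zero_pow (Nat.succ_ne_zero _) (by rw [hroot]; exact one_ne_zero))
  let ψ : G → AddChar G F := fun α => ⟨χ α, hχ0 α, hadd α⟩
  have hψinj (α : G) (h : ψ α = 0) : α = 0 := hinj α (AddChar.eq_zero_iff.1 h)
  have hbentψ (α : G) : fourierTransform ψ f α * fourierTransform ψ f α ^ p ^ n = s ^ 2 :=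
    hs2 ▸ hbent α
  have hs : s ^ p ^ n = s := pow_pow_eq_self hsp n
  have hsinv : s⁻¹ ^ p ^ n = s⁻¹ := by rw [inv_pow, hs]
  change (∀ α, s⁻¹ * fourierTransform ψ f α * (s⁻¹ * fourierTransform ψ f α) ^ p ^ n = 1) ∧
    ∀ α, fourierTransform ψ (fun x => s⁻¹ * fourierTransform ψ f x) α *
      fourierTransform ψ (fun x => s⁻¹ * fourierTransform ψ f x) α ^ p ^ n = _
  refine ⟨fun α => ?_, fun α => ?_⟩
  · rw [mul_mul_pow_mul_of_pow_eq_self hsinv, hbentψ, ← mul_pow, inv_mul_cancel₀ hs0, one_pow]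
  · have hdual : fourierTransform ψ (fun x => s⁻¹ * fourierTransform ψ f x) α = s * f (-α) := by
      rw [fourierTransform_const_mul, fourierTransform_fourierTransform hsymm hψinj, ← hs2]
      field_simp
    rw [hdual, mul_mul_pow_mul_of_pow_eq_self hs, hf, mul_one, hs2]

/-- The dual of a bent function is bent: if `f : G → S(GF(q))` is bent and `s` is a
nonzero square root of `|G| mod p` lying in the prime field `GF(p)` (i.e. `s ^ p = s`),
then `f̃ α = s⁻¹ * f̂ α` takes values in the unit circle and is itself bent. -/
theorem dual_bent (p n : ℕ) (hp : Nat.Prime p) (hn : n ≠ 0)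
    (F : Type*) [Field F] [Fintype F] (hF : Fintype.card F = p ^ (2 * n))
    (G : Type*) [AddCommGroup G] [Fintype G]
    (hexp : ∀ x : G, (p ^ n + 1) • x = 0)
    (χ : G → G → F)
    (hadd : ∀ α x y : G, χ α (x + y) = χ α x * χ α y)
    (hroot : ∀ α x : G, χ α x ^ (p ^ n + 1) = 1)
    (hsymm : ∀ α x : G, χ α x = χ x α)
    (hinj : ∀ α : G, (∀ x : G, χ α x = 1) → α = 0)
    (f : G → F) (hf : ∀ x : G, f x * (f x) ^ p ^ n = 1)
    (hbent : ∀ α : G, (∑ x : G, f x * χ α x) * ((∑ x : G, f x * χ α x)) ^ p ^ n =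
      (Fintype.card G : F))
    (s : F) (hs0 : s ≠ 0) (hs2 : s ^ 2 = (Fintype.card G : F)) (hsp : s ^ p = s) :
    (∀ α : G,
      (s⁻¹ * ∑ x : G, f x * χ α x) * (s⁻¹ * ∑ x : G, f x * χ α x) ^ p ^ n = 1) ∧
    (∀ α : G,
      (∑ x : G, (s⁻¹ * ∑ y : G, f y * χ x y) * χ α x) *
        ((∑ x : G, (s⁻¹ * ∑ y : G, f y * χ x y) * χ α x)) ^ p ^ n =
        (Fintype.card G : F)) :=
  dual_bent_general p n F G χ hadd hroot hsymm hinj f hf hbent s hs0 hs2 hsp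
end
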